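/- Let Φ(z) = νz + d with |ν| ≤ 1 and let Υ be an entire function on ℂ such that C_{Υ,Φ} is bounded on H_E(ζ). If C_{Υ,Φ} is self-adjoint, then Υ(z) = α K_{Φ(0)}(z) for all z ∈ ℂ, where α = ζ₀² \overline{Υ(0)} is a real number, and one of the following holds: (i) Υ(0) = 0, in which case Υ ≡ 0 and C_{Υ,Φ} = 0; or (ii) Υ(0) ≠ 0 and ν is a real number. -/

import Mathlib

/-!
Pairing with reproducing kernels, `⟪K p, g⟫ = g p`, turns the defining identity of `T` into
`T† (K z) = conj (Υ z) • K (ν z + d)`. For self-adjoint `T`, evaluating `T (K 0)` gives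
`Υ = ζ₀² conj (Υ 0) • K d`, and the diagonal entries `⟪x, T x⟫` are real. For `x = K 0` this entry
is `Υ 0 / ζ₀²`, so `Υ 0` is real. For the monomial `x = z` it is `ζ₁²` times the first Taylor
coefficient of `Υ z (ν z + d)`, namely `Υ'(0) d + Υ 0 ν = ζ₀² Υ 0 |d|² / ζ₁² + Υ 0 ν`, which forces
`ν` real when `Υ 0 ≠ 0`. When `Υ 0 = 0`, `Υ ≡ 0`, and `T = 0` because an element of `H_E(ζ)` is
determined by the entire function it represents (uniqueness of power series).
-/

open Filter ContinuousLinearMap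
open scoped ComplexConjugate

noncomputable section

/-- The weighted Hardy space of entire functions `H_E(ζ)`, realized as the Hilbert space of
coefficient sequences: an entire function `g z = ∑ bₙ zⁿ` with `∑ |bₙ|² ζₙ² < ∞` is encoded by
the `ℓ²`-sequence `n ↦ bₙ * ζₙ`.  With this identification the `lp`-inner product
`⟪f, g⟫ = ∑ conj (f n) * g n` is exactly `∑ conj bₙ * cₙ * ζₙ²` (Mathlib's convention:
conjugate-linear in the first variable). -/
abbrev HE (_ζ : ℕ → ℝ) : Type := lp (fun _ : ℕ => ℂ) 2

/-- The `n`-th Taylor coefficient `bₙ` of an element of `H_E(ζ)`. -/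
def HE.coeff (ζ : ℕ → ℝ) (f : HE ζ) (n : ℕ) : ℂ := f n / (ζ n : ℂ)

/-- The entire function `z ↦ ∑ bₙ zⁿ` represented by an element of `H_E(ζ)`. -/
def HE.toFun (ζ : ℕ → ℝ) (f : HE ζ) : ℂ → ℂ := fun z => ∑' n, HE.coeff ζ f n * z ^ n

open scoped InnerProductSpace

theorem hasFPowerSeriesOnBall_tsum_mul_pow {𝕜 : Type*} [RCLike 𝕜] {a : ℕ → 𝕜}
    (ha : ∀ z : 𝕜, Summable fun n => a n * z ^ n) :
    HasFPowerSeriesOnBall (fun z => ∑' n, a n * z ^ n)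
      (FormalMultilinearSeries.ofScalars 𝕜 a) 0 ⊤ := by
  set p := FormalMultilinearSeries.ofScalars 𝕜 a
  have hradius : p.radius = ⊤ := by
    refine ENNReal.eq_top_of_forall_nnreal_le fun r => p.le_radius_of_tendsto (l := 0) ?_
    simpa [p, FormalMultilinearSeries.ofScalars_norm] using
      (ha ((r : ℝ) : 𝕜)).tendsto_atTop_zero.norm
  have hsum : p.sum = fun z => ∑' n, a n * z ^ n :=
    FormalMultilinearSeries.ofScalarsSum_eq_tsum a
  simpa [hsum, hradius] using p.hasFPowerSeriesOnBall (by simp [hradius])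

theorem IsSelfAdjoint.conj_inner_self_apply {E : Type*} [NormedAddCommGroup E]
    [InnerProductSpace ℂ E] [CompleteSpace E] {T : E →L[ℂ] E} (hT : IsSelfAdjoint T) (x : E) :
    conj ⟪x, T x⟫_ℂ = ⟪x, T x⟫_ℂ :=
  Complex.conj_eq_iff_im.mpr (hT.isSymmetric.im_inner_self_apply x)

namespace HE

variable {ζ : ℕ → ℝ}

theorem coeff_mul_ofReal {n : ℕ} (hζ : ζ n ≠ 0) (f : HE ζ) : coeff ζ f n * ζ n = f n :=
  div_mul_cancel₀ _ (Complex.ofReal_ne_zero.mpr hζ)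

theorem coeff_smul (c : ℂ) (f : HE ζ) (n : ℕ) : coeff ζ (c • f) n = c * coeff ζ f n :=
  mul_div_assoc c (f n) _

theorem toFun_smul (c : ℂ) (f : HE ζ) (z : ℂ) : toFun ζ (c • f) z = c * toFun ζ f z := by
  simp only [toFun, coeff_smul, mul_assoc, tsum_mul_left]

theorem toFun_eq_of_coeff_eq_zero {f : HE ζ} (m : ℕ) (hf : ∀ n ≠ m, coeff ζ f n = 0) (z : ℂ) :
    toFun ζ f z = coeff ζ f m * z ^ m :=
  tsum_eq_single m fun n hn => by rw [hf n hn, zero_mul]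

theorem eq_zero_of_coeff_eq_zero (hζ : ∀ n, ζ n ≠ 0) {f : HE ζ} (hf : ∀ n, coeff ζ f n = 0) :
    f = 0 :=
  lp.ext <| funext fun n => by rw [← coeff_mul_ofReal (hζ n), hf, zero_mul]; rfl

theorem coeff_single {m : ℕ} (hζ : ζ m ≠ 0) (n : ℕ) :
    coeff ζ (lp.single 2 m (ζ m : ℂ)) n = if n = m then 1 else 0 := by
  rcases eq_or_ne n m with rfl | hn
  · rw [coeff, lp.single_apply_self, div_self (Complex.ofReal_ne_zero.mpr hζ), if_pos rfl]
  · rw [coeff, lp.single_apply_ne _ _ _ hn, zero_div, if_neg hn]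

theorem toFun_single {m : ℕ} (hζ : ζ m ≠ 0) (z : ℂ) :
    toFun ζ (lp.single 2 m (ζ m : ℂ)) z = z ^ m := by
  rw [toFun_eq_of_coeff_eq_zero m (fun n hn => by rw [coeff_single hζ, if_neg hn]),
    coeff_single hζ, if_pos rfl, one_mul]

theorem inner_single {m : ℕ} (hζ : ζ m ≠ 0) (g : HE ζ) :
    ⟪lp.single 2 m (ζ m : ℂ), g⟫_ℂ = (ζ m : ℂ) ^ 2 * coeff ζ g m := by
  rw [lp.inner_single_left, RCLike.inner_apply, Complex.conj_ofReal, ← coeff_mul_ofReal hζ]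
  ring

def IsKernelAt (ζ : ℕ → ℝ) (k : HE ζ) (p : ℂ) : Prop :=
  ∀ n, coeff ζ k n = conj p ^ n / (ζ n : ℂ) ^ 2

section Kernel

variable {k : HE ζ} {p : ℂ}

theorem inner_apply_of_isKernelAt (hζ : ∀ n, ζ n ≠ 0) (hk : IsKernelAt ζ k p) (g : HE ζ)
    (n : ℕ) : ⟪k n, g n⟫_ℂ = coeff ζ g n * p ^ n := by
  have hζn : (ζ n : ℂ) ≠ 0 := Complex.ofReal_ne_zero.mpr (hζ n)
  rw [RCLike.inner_apply, ← coeff_mul_ofReal (hζ n) k, ← coeff_mul_ofReal (hζ n) g, hk]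
  simp only [map_mul, map_div₀, map_pow, Complex.conj_conj, Complex.conj_ofReal]
  field_simp

theorem summable_coeff_mul_pow (hζ : ∀ n, ζ n ≠ 0) (hk : IsKernelAt ζ k p) (g : HE ζ) :
    Summable fun n => coeff ζ g n * p ^ n :=
  (lp.summable_inner k g).congr (inner_apply_of_isKernelAt hζ hk g)

theorem inner_eq_toFun (hζ : ∀ n, ζ n ≠ 0) (hk : IsKernelAt ζ k p) (g : HE ζ) :
    ⟪k, g⟫_ℂ = toFun ζ g p :=
  (lp.inner_eq_tsum k g).trans (tsum_congr (inner_apply_of_isKernelAt hζ hk g))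

theorem toFun_of_isKernelAt_zero (hk : IsKernelAt ζ k 0) (z : ℂ) :
    toFun ζ k z = 1 / (ζ 0 : ℂ) ^ 2 := by
  rw [toFun_eq_of_coeff_eq_zero 0 (fun n hn => by rw [hk, map_zero, zero_pow hn, zero_div]),
    hk]
  simp

end Kernel

theorem hasFPowerSeriesOnBall_toFun {f : HE ζ}
    (hsum : ∀ z, Summable fun n => coeff ζ f n * z ^ n) :
    HasFPowerSeriesOnBall (toFun ζ f) (FormalMultilinearSeries.ofScalars ℂ (coeff ζ f)) 0 ⊤ :=
  hasFPowerSeriesOnBall_tsum_mul_pow hsum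

theorem eq_zero_of_toFun_eq_zero (hζ : ∀ n, ζ n ≠ 0) {f : HE ζ}
    (hsum : ∀ z, Summable fun n => coeff ζ f n * z ^ n) (hf : toFun ζ f = 0) : f = 0 := by
  have h := (hasFPowerSeriesOnBall_toFun hsum).hasFPowerSeriesAt
  rw [hf] at h
  exact eq_zero_of_coeff_eq_zero hζ
    (congrFun ((FormalMultilinearSeries.ofScalars_series_eq_zero ℂ).mp h.eq_zero))

theorem hasDerivAt_toFun_zero {f : HE ζ} (hsum : ∀ z, Summable fun n => coeff ζ f n * z ^ n) :
    HasDerivAt (toFun ζ f) (coeff ζ f 1) 0 := by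
  simpa [FormalMultilinearSeries.ofScalars_apply_eq] using
    (hasFPowerSeriesOnBall_toFun hsum).hasFPowerSeriesAt.hasDerivAt

def IsWeightedComposition (ζ : ℕ → ℝ) (Υ Φ : ℂ → ℂ) (T : HE ζ →L[ℂ] HE ζ) : Prop :=
  ∀ f z, toFun ζ (T f) z = Υ z * toFun ζ f (Φ z)

section WeightedComposition

variable {K : ℂ → HE ζ} {Υ Φ : ℂ → ℂ} {T : HE ζ →L[ℂ] HE ζ}

theorem adjoint_apply_kernel (hζ : ∀ n, ζ n ≠ 0) (hK : ∀ p, IsKernelAt ζ (K p) p)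
    (hT : IsWeightedComposition ζ Υ Φ T) (z : ℂ) : adjoint T (K z) = conj (Υ z) • K (Φ z) :=
  ext_inner_right ℂ fun f => by
    rw [adjoint_inner_left, inner_eq_toFun hζ (hK z), hT, inner_smul_left, Complex.conj_conj,
      inner_eq_toFun hζ (hK _)]

theorem eq_zero_of_weight_eq_zero (hζ : ∀ n, ζ n ≠ 0) (hK : ∀ p, IsKernelAt ζ (K p) p)
    (hT : IsWeightedComposition ζ Υ Φ T) (hΥ : ∀ z, Υ z = 0) : T = 0 :=
  ContinuousLinearMap.ext fun f =>
    eq_zero_of_toFun_eq_zero hζ (fun z => summable_coeff_mul_pow hζ (hK z) (T f))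
      (funext fun z => by rw [hT, hΥ, zero_mul]; rfl)

theorem weight_eq_of_isSelfAdjoint (hζ : ∀ n, ζ n ≠ 0) (hK : ∀ p, IsKernelAt ζ (K p) p)
    (hT : IsWeightedComposition ζ Υ Φ T) (hSA : IsSelfAdjoint T) (z : ℂ) :
    Υ z = (ζ 0 : ℂ) ^ 2 * conj (Υ 0) * toFun ζ (K (Φ 0)) z := by
  have h := hT (K 0) z
  rw [← hSA.adjoint_eq, adjoint_apply_kernel hζ hK hT, toFun_smul,
    toFun_of_isKernelAt_zero (hK 0), mul_one_div,
    eq_div_iff (pow_ne_zero 2 (Complex.ofReal_ne_zero.mpr (hζ 0)))] at h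
  linear_combination -h

theorem conj_weight_zero_of_isSelfAdjoint (hζ : ∀ n, ζ n ≠ 0) (hK : ∀ p, IsKernelAt ζ (K p) p)
    (hT : IsWeightedComposition ζ Υ Φ T) (hSA : IsSelfAdjoint T) : conj (Υ 0) = Υ 0 := by
  have h := hSA.conj_inner_self_apply (K 0)
  rw [inner_eq_toFun hζ (hK 0), hT, toFun_of_isKernelAt_zero (hK 0), map_mul, map_div₀,
    map_one, map_pow, Complex.conj_ofReal] at h
  exact mul_right_cancel₀ (one_div_ne_zero (pow_ne_zero 2 (Complex.ofReal_ne_zero.mpr (hζ 0)))) h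

theorem conj_eq_of_isSelfAdjoint_affine {ν d : ℂ} (hζ : ∀ n, ζ n ≠ 0)
    (hK : ∀ p, IsKernelAt ζ (K p) p) (hT : IsWeightedComposition ζ Υ (fun z => ν * z + d) T)
    (hSA : IsSelfAdjoint T) (hΥ0 : Υ 0 ≠ 0) : conj ν = ν := by
  have hsum (f : HE ζ) (z : ℂ) : Summable fun n => coeff ζ f n * z ^ n :=
    summable_coeff_mul_pow hζ (hK z) f
  set f₁ : HE ζ := lp.single 2 1 (ζ 1 : ℂ)
  set α := (ζ 0 : ℂ) ^ 2 * conj (Υ 0)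
  have hΥ_deriv : HasDerivAt Υ (α * (conj d / (ζ 1 : ℂ) ^ 2)) 0 := by
    have hΥ : Υ = fun z => α * toFun ζ (K d) z := funext fun z => by
      simpa using weight_eq_of_isSelfAdjoint hζ hK hT hSA z
    rw [hΥ, ← pow_one (conj d), ← hK d 1]
    exact (hasDerivAt_toFun_zero (hsum (K d))).const_mul α
  have hTf₁_deriv :
      HasDerivAt (toFun ζ (T f₁)) (α * (conj d / (ζ 1 : ℂ) ^ 2) * d + Υ 0 * ν) 0 := by
    have hTf₁ : toFun ζ (T f₁) = fun z => Υ z * (ν * z + d) :=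
      funext fun z => by rw [hT, toFun_single (hζ 1), pow_one]
    have hlin : HasDerivAt (fun z : ℂ => ν * z + d) ν 0 := by
      simpa using ((hasDerivAt_id (0 : ℂ)).const_mul ν).add_const d
    simpa only [hTf₁, mul_zero, zero_add] using hΥ_deriv.fun_mul hlin
  have hcoeff_real : conj (coeff ζ (T f₁) 1) = coeff ζ (T f₁) 1 := by
    have h := hSA.conj_inner_self_apply f₁
    rw [inner_single (hζ 1), map_mul, map_pow, Complex.conj_ofReal] at h
    exact mul_left_cancel₀ (pow_ne_zero 2 (Complex.ofReal_ne_zero.mpr (hζ 1))) h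
  rw [(hasDerivAt_toFun_zero (hsum (T f₁))).unique hTf₁_deriv] at hcoeff_real
  simp only [α, map_add, map_mul, map_div₀, map_pow, Complex.conj_ofReal, Complex.conj_conj,
    conj_weight_zero_of_isSelfAdjoint hζ hK hT hSA] at hcoeff_real
  refine mul_left_cancel₀ hΥ0 ?_
  linear_combination hcoeff_real

end WeightedComposition

end HE

theorem weighted_composition_selfAdjoint_necessary_general_general
    (ζ : ℕ → ℝ) (hζ : ∀ n, 0 < ζ n)
    (ν d : ℂ)
    (Υ : ℂ → ℂ)
    (K : ℂ → HE ζ) (hK : ∀ p n, HE.coeff ζ (K p) n = (conj p) ^ n / (ζ n : ℂ) ^ 2)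
    (T : HE ζ →L[ℂ] HE ζ)
    (hT : ∀ f : HE ζ, ∀ z : ℂ, HE.toFun ζ (T f) z = Υ z * HE.toFun ζ f (ν * z + d)) :
    IsSelfAdjoint T →
      ((∀ z : ℂ, Υ z = (ζ 0 : ℂ) ^ 2 * conj (Υ 0) * HE.toFun ζ (K d) z) ∧
       (∃ r : ℝ, (ζ 0 : ℂ) ^ 2 * conj (Υ 0) = (r : ℂ)) ∧
       ((Υ 0 = 0 ∧ (∀ z : ℂ, Υ z = 0) ∧ T = 0) ∨
        (Υ 0 ≠ 0 ∧ ∃ r : ℝ, ν = (r : ℂ)))) := by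
  intro hSA
  have hζ₀ : ∀ n, ζ n ≠ 0 := fun n => (hζ n).ne'
  have hΥ (z : ℂ) : Υ z = (ζ 0 : ℂ) ^ 2 * conj (Υ 0) * HE.toFun ζ (K d) z := by
    simpa using HE.weight_eq_of_isSelfAdjoint hζ₀ hK hT hSA z
  have hΥ0_real := HE.conj_weight_zero_of_isSelfAdjoint hζ₀ hK hT hSA
  refine ⟨hΥ, ⟨ζ 0 ^ 2 * (Υ 0).re, ?_⟩, ?_⟩
  · push_cast
    rw [Complex.conj_eq_iff_re.mp hΥ0_real, hΥ0_real]
  by_cases hΥ0 : Υ 0 = 0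
  · have hΥ_zero (z : ℂ) : Υ z = 0 := by rw [hΥ, hΥ0, map_zero, mul_zero, zero_mul]
    exact Or.inl ⟨hΥ0, hΥ_zero, HE.eq_zero_of_weight_eq_zero hζ₀ hK hT hΥ_zero⟩
  · exact Or.inr ⟨hΥ0, ν.re,
      (Complex.conj_eq_iff_re.mp (HE.conj_eq_of_isSelfAdjoint_affine hζ₀ hK hT hSA hΥ0)).symm⟩

/-- For `Φ z = ν z + d` with `|ν| ≤ 1` and entire `Υ` with `C_{Υ,Φ}` bounded on `H_E(ζ)`:
if `C_{Υ,Φ}` is self-adjoint then `Υ z = α K_{Φ 0} z` where `α = ζ₀² conj (Υ 0)` is real,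
and either (i) `Υ 0 = 0`, whence `Υ ≡ 0` and `C_{Υ,Φ} = 0`, or (ii) `Υ 0 ≠ 0` and `ν` is
real. -/
theorem weighted_composition_selfAdjoint_necessary_general
    (ζ : ℕ → ℝ) (hζ : ∀ n, 0 < ζ n)
    (hlim : Tendsto (fun n : ℕ => (ζ n) ^ ((1 : ℝ) / n)) atTop atTop)
    (ν d : ℂ) (hν : ‖ν‖ ≤ 1)
    (Υ : ℂ → ℂ) (hΥ : Differentiable ℂ Υ)
    (K : ℂ → HE ζ) (hK : ∀ p n, HE.coeff ζ (K p) n = (conj p) ^ n / (ζ n : ℂ) ^ 2)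
    (T : HE ζ →L[ℂ] HE ζ)
    (hT : ∀ f : HE ζ, ∀ z : ℂ, HE.toFun ζ (T f) z = Υ z * HE.toFun ζ f (ν * z + d)) :
    IsSelfAdjoint T →
      ((∀ z : ℂ, Υ z = (ζ 0 : ℂ) ^ 2 * conj (Υ 0) * HE.toFun ζ (K d) z) ∧
       (∃ r : ℝ, (ζ 0 : ℂ) ^ 2 * conj (Υ 0) = (r : ℂ)) ∧
       ((Υ 0 = 0 ∧ (∀ z : ℂ, Υ z = 0) ∧ T = 0) ∨
        (Υ 0 ≠ 0 ∧ ∃ r : ℝ, ν = (r : ℂ)))) :=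
  weighted_composition_selfAdjoint_necessary_general_general ζ hζ ν d Υ K hK T hT
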